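/- arXiv:2403.07695 — 5 statements merged into one kernel-verified Lean document; each statement's English description precedes it below -/
import Mathlib

section
/- (Rådström cancellation law) Let Y be a real normed space and A₁, A₂, C ⊆ Y with A₁ + C ⊆ A₂ + C (Minkowski sums). If A₂ is convex and closed and C is nonempty and bounded, then A₁ ⊆ A₂. -/
open Pointwise Set

/-- Rådström cancellation law. -/
theorem radstrom_cancellation
    {Y : Type*} [NormedAddCommGroup Y] [NormedSpace ℝ Y]
    (A₁ A₂ C : Set Y)
    (h : A₁ + C ⊆ A₂ + C)
    (hA₂conv : Convex ℝ A₂) (hA₂closed : IsClosed A₂)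
    (hCne : C.Nonempty) (hCbdd : Bornology.IsBounded C) :
    A₁ ⊆ A₂ := by
  obtain ⟨R, hR⟩ := hCbdd.exists_norm_le
  obtain ⟨c₀, hc₀⟩ := hCne
  intro a ha
  -- key claim
  have key : ∀ n : ℕ, ∃ s ∈ A₂, ∃ c ∈ C,
      ((n : ℝ) + 1) • a + c₀ = ((n : ℝ) + 1) • s + c := by
    intro n
    induction n with
    | zero =>
      obtain ⟨s, hs, c, hc, hsc⟩ := h (add_mem_add ha hc₀)
      exact ⟨s, hs, c, hc, by simpa using hsc.symm⟩
    | succ n ih =>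
      obtain ⟨s, hs, c, hc, hsc⟩ := ih
      obtain ⟨s', hs', c', hc', hsc'⟩ := h (add_mem_add ha hc)
      have hn2 : (0:ℝ) < (n:ℝ) + 2 := by positivity
      refine ⟨(((n:ℝ)+1)/((n:ℝ)+2)) • s + ((1:ℝ)/((n:ℝ)+2)) • s',
        hA₂conv hs hs' (by positivity) (by positivity) (by field_simp; ring), c', hc', ?_⟩
      have hsc'' : s' + c' = a + c := hsc'
      push_cast
      have hcast : ((n:ℝ)+1+1) = (n:ℝ)+2 := by ring
      have h1 : ((n:ℝ)+2) * (((n:ℝ)+1)/((n:ℝ)+2)) = (n:ℝ)+1 := by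
        field_simp
      have h2 : ((n:ℝ)+2) * ((1:ℝ)/((n:ℝ)+2)) = 1 := by
        field_simp
      rw [hcast, smul_add, smul_smul, smul_smul, h1, h2, one_smul]
      linear_combination (norm := module) hsc - hsc''
  -- a is in the closure of A₂
  have : a ∈ closure A₂ := by
    rw [Metric.mem_closure_iff]
    intro ε hε
    obtain ⟨n, hn⟩ := exists_nat_gt ((2 * R) / ε)
    obtain ⟨s, hs, c, hc, hsc⟩ := key n
    refine ⟨s, hs, ?_⟩
    have hn1 : (0:ℝ) < (n:ℝ) + 1 := by positivity
    have hdiff : a - s = (((n:ℝ)+1)⁻¹) • (c - c₀) := by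
      have heq : ((n:ℝ)+1) • (a - s) = c - c₀ := by
        rw [smul_sub]
        linear_combination (norm := module) hsc
      rw [← heq, smul_smul, inv_mul_cancel₀ (ne_of_gt hn1), one_smul]
    have hRnn : (0:ℝ) ≤ R := le_trans (norm_nonneg c₀) (hR c₀ hc₀)
    have hnormle : dist a s ≤ (2 * R) / ((n:ℝ) + 1) := by
      rw [dist_eq_norm, hdiff, norm_smul, norm_inv, Real.norm_eq_abs,
        abs_of_pos hn1, div_eq_inv_mul]
      gcongr
      calc ‖c - c₀‖ ≤ ‖c‖ + ‖c₀‖ := norm_sub_le _ _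
        _ ≤ R + R := add_le_add (hR c hc) (hR c₀ hc₀)
        _ = 2 * R := by ring
    have : (2 * R) / ((n:ℝ) + 1) < ε := by
      rw [div_lt_iff₀ hn1]
      have := (div_lt_iff₀ hε).mp (lt_trans hn (lt_add_one _))
      linarith [mul_comm ε ((n:ℝ)+1)]
    exact lt_of_le_of_lt hnormle this
  rwa [hA₂closed.closure_eq] at this
end

section
/- (Bernstein–Doetsch type theorem) Let Y be a real normed space, m ∈ (0,1], c > 0, and D ⊆ (0,∞) a harmonically m-convex set. Suppose F : D → Set Y has nonempty compact convex values, is upper semicontinuous on D, and satisfies the dyadic strong harmonic m-concavity property: for all x, y ∈ D and all naturals k, n with 0 < k < 2ⁿ, F(mxy/((k/2ⁿ)mx + (1 − k/2ⁿ)y)) + cm(k/2ⁿ)(1 − k/2ⁿ)((x−y)/(xy))²•B̄ ⊆ (k/2ⁿ)•F(y) + m(1 − k/2ⁿ)•F(x). Then F is strongly harmonically m-concave with modulus c: for all x, y ∈ D and all t ∈ [0,1], F(mxy/(tmx+(1-t)y)) + cmt(1-t)((x−y)/(xy))²•B̄ ⊆ t•F(y) + m(1-t)•F(x). -/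
open Pointwise Set

private lemma dyadic_near (t : ℝ) (ht0 : 0 ≤ t) (ht1 : t ≤ 1) (n : ℕ) (hn : 1 ≤ n) :
    ∃ k : ℕ, 0 < k ∧ k < 2 ^ n ∧ |(k : ℝ) / 2 ^ n - t| ≤ 1 / 2 ^ n := by
  have hN0 : (0 : ℝ) < 2 ^ n := by positivity
  have hN2 : (2 : ℕ) ≤ 2 ^ n := by
    calc (2:ℕ) = 2 ^ 1 := rfl
    _ ≤ 2 ^ n := Nat.pow_le_pow_right (by norm_num) hn
  by_cases h : t * 2 ^ n < 1
  · refine ⟨1, one_pos, by omega, ?_⟩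
    have ht' : t < 1 / 2 ^ n := (lt_div_iff₀ hN0).mpr (by linarith)
    rw [abs_le]
    push_cast
    constructor <;> nlinarith
  · push_neg at h
    set j := ⌊t * 2 ^ n⌋₊ with hj
    have hj1 : 1 ≤ j := Nat.le_floor (by exact_mod_cast h)
    have h1 : (j : ℝ) ≤ t * 2 ^ n := Nat.floor_le (by positivity)
    have h2 : t * 2 ^ n < j + 1 := Nat.lt_floor_add_one _
    by_cases hjN : j < 2 ^ n
    · refine ⟨j, hj1, hjN, ?_⟩
      have e : (j : ℝ) / 2 ^ n - t = ((j : ℝ) - t * 2 ^ n) / 2 ^ n := by field_simp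
      rw [e, abs_div, abs_of_pos hN0, div_le_div_iff_of_pos_right hN0, abs_le]
      constructor <;> linarith
    · push_neg at hjN
      have hNj : ((2:ℝ) ^ n : ℝ) ≤ (j : ℝ) := by exact_mod_cast hjN
      have ht1' : (1:ℝ) ≤ t := by nlinarith
      have ht : t = 1 := le_antisymm ht1 ht1'
      refine ⟨2 ^ n - 1, by omega, by omega, ?_⟩
      have hc : ((2 ^ n - 1 : ℕ) : ℝ) = 2 ^ n - 1 := by
        push_cast [Nat.cast_sub (by omega : 1 ≤ 2 ^ n)]; ring
      rw [hc, ht]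
      have e : ((2:ℝ) ^ n - 1) / 2 ^ n - 1 = -(1 / 2 ^ n) := by field_simp; ring
      rw [e, abs_neg, abs_of_pos (by positivity)]

set_option maxHeartbeats 1000000 in
/-- Bernstein–Doetsch type theorem, m-version: an upper
semicontinuous set-valued function satisfying the dyadic strong harmonic
m-concavity property is strongly harmonically m-concave with modulus c. -/
theorem bernstein_doetsch_m
    {Y : Type*} [NormedAddCommGroup Y] [NormedSpace ℝ Y]
    (m : ℝ) (hm : m ∈ Set.Ioc (0 : ℝ) 1)
    (c : ℝ) (hc : 0 < c)
    (D : Set ℝ) (hD : D ⊆ Set.Ioi (0 : ℝ))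
    (hDconv : ∀ x ∈ D, ∀ y ∈ D, ∀ s ∈ Set.Icc (0 : ℝ) 1,
      m * x * y / (s * m * x + (1 - s) * y) ∈ D)
    (F : ℝ → Set Y)
    (hFne : ∀ x ∈ D, (F x).Nonempty)
    (hFcomp : ∀ x ∈ D, IsCompact (F x))
    (hFconv : ∀ x ∈ D, Convex ℝ (F x))
    (hFusc : ∀ x₀ ∈ D, ∀ ε > (0 : ℝ), ∃ δ > (0 : ℝ), ∀ x ∈ D, |x - x₀| < δ →
      F x₀ ⊆ F x + ε • Metric.closedBall (0 : Y) 1)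
    (hFdyadic : ∀ x ∈ D, ∀ y ∈ D, ∀ k n : ℕ, 0 < k → k < 2 ^ n →
      F (m * x * y / (((k : ℝ) / 2 ^ n) * m * x + (1 - (k : ℝ) / 2 ^ n) * y))
          + (c * m * ((k : ℝ) / 2 ^ n) * (1 - (k : ℝ) / 2 ^ n) * ((x - y) / (x * y)) ^ 2)
              • Metric.closedBall (0 : Y) 1
        ⊆ ((k : ℝ) / 2 ^ n) • F y + (m * (1 - (k : ℝ) / 2 ^ n)) • F x) :
    ∀ x ∈ D, ∀ y ∈ D, ∀ t ∈ Set.Icc (0 : ℝ) 1,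
      F (m * x * y / (t * m * x + (1 - t) * y))
          + (c * m * t * (1 - t) * ((x - y) / (x * y)) ^ 2) • Metric.closedBall (0 : Y) 1
        ⊆ t • F y + (m * (1 - t)) • F x := by
  intro x hx y hy t ht
  have hm0 : 0 < m := hm.1
  have hx0 : 0 < x := hD hx
  have hy0 : 0 < y := hD hy
  set r2 : ℝ := ((x - y) / (x * y)) ^ 2 with hr2def
  have hr2 : 0 ≤ r2 := sq_nonneg _
  -- bounds on the compact sets
  obtain ⟨Mx, hMx⟩ := isBounded_iff_forall_norm_le.mp (hFcomp x hx).isBounded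
  obtain ⟨My, hMy⟩ := isBounded_iff_forall_norm_le.mp (hFcomp y hy).isBounded
  set M : ℝ := max (max Mx My) 0 with hMdef
  have hM0 : 0 ≤ M := le_max_right _ _
  have hMx' : ∀ z ∈ F x, ‖z‖ ≤ M := fun z hz =>
    (hMx z hz).trans ((le_max_left _ _).trans (le_max_left _ _))
  have hMy' : ∀ z ∈ F y, ‖z‖ ≤ M := fun z hz =>
    (hMy z hz).trans ((le_max_right _ _).trans (le_max_left _ _))
  -- denominator positivity
  have hden : ∀ s ∈ Set.Icc (0:ℝ) 1, 0 < s * m * x + (1 - s) * y := by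
    intro s hs
    rcases lt_or_ge s 1 with h | h
    · have h1 : 0 < (1 - s) * y := mul_pos (by linarith) hy0
      nlinarith [mul_nonneg (mul_nonneg hs.1 hm0.le) hx0.le]
    · have hs1 : s = 1 := le_antisymm hs.2 h
      subst hs1; nlinarith [mul_pos hm0 hx0]
  set g : ℝ → ℝ := fun s => m * x * y / (s * m * x + (1 - s) * y) with hgdef
  have hgD : ∀ s ∈ Set.Icc (0:ℝ) 1, g s ∈ D := fun s hs => hDconv x hx y hy s hs
  have hgcont : ContinuousAt g t := by
    apply ContinuousAt.div continuousAt_const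
    · fun_prop
    · exact (hden t ht).ne'
  -- main argument
  intro p hp
  rw [Set.mem_add] at hp
  obtain ⟨z, hz, v, hv, hzv⟩ := hp
  rw [Set.mem_smul_set] at hv
  obtain ⟨b, hb, rfl⟩ := hv
  have hbn : ‖b‖ ≤ 1 := by simpa using hb
  set S : Set Y := t • F y + (m * (1 - t)) • F x with hSdef
  have hScomp : IsCompact S := ((hFcomp y hy).smul t).add ((hFcomp x hx).smul _)
  have key : ∀ ε > (0:ℝ), ∃ q ∈ S, dist p q < ε := by
    intro ε hε
    have hε4 : 0 < ε / 4 := by linarith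
    obtain ⟨δ, hδ0, hδ⟩ := hFusc (g t) (hgD t ht) (ε / 4) hε4
    obtain ⟨δ₂, hδ₂0, hδ₂⟩ := Metric.continuousAt_iff.mp hgcont δ hδ0
    set K : ℝ := M + m * M + c * m * r2 + 1 with hKdef
    have hK0 : 0 < K := by
      rw [hKdef]
      have h1 := mul_nonneg hm0.le hM0
      have h2 := mul_nonneg (mul_nonneg hc.le hm0.le) hr2
      linarith
    obtain ⟨n₀, hn₀⟩ := exists_pow_lt_of_lt_one (lt_min hδ₂0 (div_pos hε4 hK0))
      (by norm_num : (1:ℝ)/2 < 1)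
    set n := max n₀ 1 with hndef
    have hpow : ((1:ℝ)/2) ^ n ≤ ((1:ℝ)/2) ^ n₀ :=
      pow_le_pow_of_le_one (by norm_num) (by norm_num) (le_max_left _ _)
    have hsmall : (1:ℝ) / 2 ^ n < min δ₂ (ε / 4 / K) := by
      calc (1:ℝ) / 2 ^ n = ((1:ℝ)/2) ^ n := by rw [div_pow, one_pow]
      _ ≤ ((1:ℝ)/2) ^ n₀ := hpow
      _ < _ := hn₀
    obtain ⟨k, hk0, hkN, hks⟩ := dyadic_near t ht.1 ht.2 n (le_max_right _ _)
    set s : ℝ := (k : ℝ) / 2 ^ n with hsdef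
    have hs0 : 0 ≤ s := by positivity
    have hs1 : s ≤ 1 := by
      rw [hsdef, div_le_one (by positivity)]
      exact_mod_cast hkN.le
    have hsIcc : s ∈ Set.Icc (0:ℝ) 1 := ⟨hs0, hs1⟩
    have hst : |s - t| ≤ 1 / 2 ^ n := hks
    have hdist : |g s - g t| < δ := by
      have := hδ₂ (x := s) (by rw [Real.dist_eq]; exact hst.trans_lt (hsmall.trans_le (min_le_left _ _)))
      rwa [Real.dist_eq] at this
    have hz' := hδ (g s) (hgD s hsIcc) hdist hz
    rw [Set.mem_add] at hz'
    obtain ⟨w, hw, e, he, hwe⟩ := hz'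
    rw [Set.mem_smul_set] at he
    obtain ⟨e1, he1, rfl⟩ := he
    have he1n : ‖e1‖ ≤ 1 := by simpa using he1
    -- apply the dyadic hypothesis at s
    have hmem := hFdyadic x hx y hy k n hk0 hkN
      (Set.add_mem_add hw (Set.smul_mem_smul_set hb))
    rw [Set.mem_add] at hmem
    obtain ⟨a1, ha1, a2, ha2, ha⟩ := hmem
    rw [Set.mem_smul_set] at ha1 ha2
    obtain ⟨u, hu, rfl⟩ := ha1
    obtain ⟨v', hv', rfl⟩ := ha2
    refine ⟨t • u + (m * (1 - t)) • v',
      Set.add_mem_add (Set.smul_mem_smul_set hu) (Set.smul_mem_smul_set hv'), ?_⟩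
    have hpq : p - (t • u + (m * (1 - t)) • v') =
        (s - t) • u + (m * (t - s)) • v' + (ε / 4) • e1
          + (c * m * t * (1 - t) * r2 - c * m * s * (1 - s) * r2) • b := by
      rw [← hzv, ← hwe]
      rw [← hr2def, ← hsdef] at ha
      have hw' : w = s • u + (m * (1 - s)) • v'
          - (c * m * s * (1 - s) * r2) • b := by
        rw [eq_sub_iff_add_eq]; exact ha.symm
      rw [hw']; module
    rw [dist_eq_norm, hpq]
    have h1 : ‖(s - t) • u‖ ≤ (1 / 2 ^ n) * M := by
      rw [norm_smul, Real.norm_eq_abs]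
      exact mul_le_mul hst (hMy' u hu) (norm_nonneg _) (by positivity)
    have h2 : ‖(m * (t - s)) • v'‖ ≤ m * ((1 / 2 ^ n) * M) := by
      rw [norm_smul, Real.norm_eq_abs, abs_mul, abs_of_pos hm0, mul_assoc]
      refine mul_le_mul_of_nonneg_left ?_ hm0.le
      have : |t - s| ≤ 1 / 2 ^ n := by rw [abs_sub_comm]; exact hst
      exact mul_le_mul this (hMx' v' hv') (norm_nonneg _) (by positivity)
    have h3 : ‖(ε / 4) • e1‖ ≤ ε / 4 := by
      rw [norm_smul, Real.norm_eq_abs, abs_of_pos hε4]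
      nlinarith [norm_nonneg e1]
    have h4 : ‖(c * m * t * (1 - t) * r2 - c * m * s * (1 - s) * r2) • b‖
        ≤ c * m * r2 * (1 / 2 ^ n) := by
      rw [norm_smul, Real.norm_eq_abs]
      have e : c * m * t * (1 - t) * r2 - c * m * s * (1 - s) * r2
          = (c * m * r2) * ((t - s) * (1 - (t + s))) := by ring
      rw [e, abs_mul, abs_of_nonneg (mul_nonneg (mul_nonneg hc.le hm0.le) hr2)]
      have h5 : |(t - s) * (1 - (t + s))| ≤ 1 / 2 ^ n := by
        rw [abs_mul]
        have ha' : |t - s| ≤ 1 / 2 ^ n := by rw [abs_sub_comm]; exact hst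
        have hb' : |1 - (t + s)| ≤ 1 :=
          abs_le.mpr ⟨by linarith [ht.1, ht.2, hs0, hs1], by linarith [ht.1, hs0]⟩
        calc |t - s| * |1 - (t + s)| ≤ (1 / 2 ^ n) * 1 :=
              mul_le_mul ha' hb' (abs_nonneg _) (by positivity)
          _ = 1 / 2 ^ n := by ring
      calc c * m * r2 * |(t - s) * (1 - (t + s))| * ‖b‖ ≤ (c * m * r2 * (1 / 2 ^ n)) * 1 :=
            mul_le_mul (mul_le_mul_of_nonneg_left h5 (mul_nonneg (mul_nonneg hc.le hm0.le) hr2))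
              hbn (norm_nonneg _)
              (mul_nonneg (mul_nonneg (mul_nonneg hc.le hm0.le) hr2) (by positivity))
        _ = _ := by ring
    have htot : ‖(s - t) • u + (m * (t - s)) • v' + (ε / 4) • e1
          + (c * m * t * (1 - t) * r2 - c * m * s * (1 - s) * r2) • b‖
        ≤ (1 / 2 ^ n) * M + m * ((1 / 2 ^ n) * M) + ε / 4 + c * m * r2 * (1 / 2 ^ n) := by
      refine le_trans (norm_add_le _ _) ?_
      refine add_le_add (le_trans (norm_add_le _ _) ?_) h4
      exact add_le_add (le_trans (norm_add_le _ _) (add_le_add h1 h2)) h3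
    have hsmallK : (1 : ℝ) / 2 ^ n < ε / 4 / K := hsmall.trans_le (min_le_right _ _)
    have h6 : (1 / 2 ^ n) * K < ε / 4 := (lt_div_iff₀ hK0).mp hsmallK
    rw [hKdef] at h6
    have h7 : (0:ℝ) ≤ 1 / 2 ^ n := by positivity
    refine htot.trans_lt ?_
    nlinarith [h7]
  have : p ∈ closure S := Metric.mem_closure_iff.mpr key
  rwa [hScomp.isClosed.closure_eq] at this
end

section
/- (Kuhn type theorem for the case m = 1) Let Y be a real normed space, c > 0, D ⊆ (0,∞) a harmonically convex set, and t ∈ (0,1) a fixed number. If F : D → Set Y has nonempty compact convex values and is strongly harmonically t-concave with modulus c, then F is strongly harmonically midconcave with modulus c, i.e. for all x, y ∈ D: F(2xy/(x+y)) + (c/4)((x−y)/(xy))²•B̄ ⊆ (1/2)•F(y) + (1/2)•F(x). -/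
open Pointwise Set

/-- Reciprocal of a weighted harmonic mean. -/
private lemma harm_inv (p q s : ℝ) (hp : p ≠ 0) (hq : q ≠ 0)
    (h : s * p + (1 - s) * q ≠ 0) :
    (p * q / (s * p + (1 - s) * q))⁻¹ = s * q⁻¹ + (1 - s) * p⁻¹ := by
  field_simp

/-- Rådström cancellation: if `A + C ⊆ B + C` with `B` closed convex and `C`
nonempty bounded, then `A ⊆ B`. -/
private theorem radstrom_cancel {Y : Type*} [NormedAddCommGroup Y] [NormedSpace ℝ Y]
    {A B C : Set Y} (hB : IsClosed B) (hBconv : Convex ℝ B)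
    (hCne : C.Nonempty) (hCbd : Bornology.IsBounded C)
    (h : A + C ⊆ B + C) : A ⊆ B := by
  obtain ⟨c₀, hc₀⟩ := hCne
  obtain ⟨M, hM⟩ := isBounded_iff_forall_norm_le.1 hCbd
  intro a ha
  have key : ∀ n : ℕ, ∃ b ∈ B, ∃ cn ∈ C, (n : ℝ) • a + c₀ = (n : ℝ) • b + cn := by
    intro n
    induction n with
    | zero =>
      have hmem : a + c₀ ∈ B + C := h (add_mem_add ha hc₀)
      rw [Set.mem_add] at hmem
      obtain ⟨b, hb, cc, hcc, _⟩ := hmem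
      exact ⟨b, hb, c₀, hc₀, by simp⟩
    | succ n ih =>
      obtain ⟨b, hb, cn, hcn, heq⟩ := ih
      have hmem : a + cn ∈ B + C := h (add_mem_add ha hcn)
      rw [Set.mem_add] at hmem
      obtain ⟨b', hb', c', hc', heq'⟩ := hmem
      have hn1 : (0:ℝ) < (n : ℝ) + 1 := by positivity
      refine ⟨((n : ℝ) / ((n : ℝ) + 1)) • b + ((1 : ℝ) / ((n : ℝ) + 1)) • b', ?_, c', hc', ?_⟩
      · exact hBconv hb hb' (by positivity) (by positivity) (by field_simp)
      · push_cast
        rw [smul_add, smul_smul, smul_smul,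
          show ((n:ℝ)+1) * ((n:ℝ)/((n:ℝ)+1)) = (n:ℝ) by field_simp,
          show ((n:ℝ)+1) * ((1:ℝ)/((n:ℝ)+1)) = 1 by field_simp, one_smul]
        calc ((n:ℝ)+1) • a + c₀ = ((n:ℝ) • a + c₀) + a := by
              rw [add_smul, one_smul]; abel
          _ = ((n:ℝ) • b + cn) + a := by rw [heq]
          _ = (n:ℝ) • b + (a + cn) := by abel
          _ = (n:ℝ) • b + (b' + c') := by rw [heq']
          _ = (n:ℝ) • b + b' + c' := by abel
  have hM0 : 0 ≤ M := le_trans (norm_nonneg c₀) (hM c₀ hc₀)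
  have hacl : a ∈ closure B := by
    rw [Metric.mem_closure_iff]
    intro ε hε
    obtain ⟨n, hn⟩ := exists_nat_gt (2 * M / ε)
    obtain ⟨b, hb, cn, hcn, heq⟩ := key (n + 1)
    have hν : (0:ℝ) < (n:ℝ) + 1 := by positivity
    have hdiff : ((n:ℝ) + 1) • (a - b) = cn - c₀ := by
      push_cast at heq
      rw [smul_sub, eq_sub_of_add_eq heq]
      abel
    refine ⟨b, hb, ?_⟩
    have hnorm : ((n:ℝ) + 1) * ‖a - b‖ = ‖cn - c₀‖ := by
      rw [← norm_smul_of_nonneg hν.le, hdiff]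
    have hbound : ‖cn - c₀‖ ≤ 2 * M := by
      calc ‖cn - c₀‖ ≤ ‖cn‖ + ‖c₀‖ := norm_sub_le _ _
        _ ≤ M + M := add_le_add (hM cn hcn) (hM c₀ hc₀)
        _ = 2 * M := by ring
    rw [dist_eq_norm]
    have h1 : ‖a - b‖ = ‖cn - c₀‖ / ((n:ℝ) + 1) := by
      rw [eq_div_iff hν.ne', mul_comm, hnorm]
    rw [h1, div_lt_iff₀ hν]
    have hn' : 2 * M < ε * (n:ℝ) := by
      rw [div_lt_iff₀ hε] at hn
      nlinarith
    nlinarith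
  rwa [hB.closure_eq] at hacl

set_option maxHeartbeats 1000000 in
/-- Kuhn type theorem, m = 1 case: a strongly harmonically
t-concave set-valued function with nonempty compact convex values is strongly
harmonically midconcave. -/
theorem kuhn_type
    {Y : Type*} [NormedAddCommGroup Y] [NormedSpace ℝ Y]
    (c : ℝ) (hc : 0 < c)
    (D : Set ℝ) (hD : D ⊆ Set.Ioi (0 : ℝ))
    (hDconv : ∀ x ∈ D, ∀ y ∈ D, ∀ s ∈ Set.Icc (0 : ℝ) 1,
      x * y / (s * x + (1 - s) * y) ∈ D)
    (t : ℝ) (ht : t ∈ Set.Ioo (0 : ℝ) 1)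
    (F : ℝ → Set Y)
    (hFne : ∀ x ∈ D, (F x).Nonempty)
    (hFcomp : ∀ x ∈ D, IsCompact (F x))
    (hFconv : ∀ x ∈ D, Convex ℝ (F x))
    (hFstrong : ∀ x ∈ D, ∀ y ∈ D,
      F (x * y / (t * x + (1 - t) * y))
          + (c * t * (1 - t) * ((x - y) / (x * y)) ^ 2) • Metric.closedBall (0 : Y) 1
        ⊆ t • F y + (1 - t) • F x) :
    ∀ x ∈ D, ∀ y ∈ D,
      F (2 * x * y / (x + y))
          + (c / 4 * ((x - y) / (x * y)) ^ 2) • Metric.closedBall (0 : Y) 1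
        ⊆ (1 / 2 : ℝ) • F y + (1 / 2 : ℝ) • F x := by
  obtain ⟨ht0, ht1⟩ := ht
  have ht1' : (0:ℝ) < 1 - t := by linarith
  intro x hx y hy
  have hx0 : (0:ℝ) < x := hD hx
  have hy0 : (0:ℝ) < y := hD hy
  have hxy0 : (0:ℝ) < x + y := by linarith
  -- the harmonic midpoint and the two auxiliary points
  have hZD : 2 * x * y / (x + y) ∈ D := by
    have h12 : (1/2 : ℝ) ∈ Set.Icc (0:ℝ) 1 := by norm_num
    have hmem := hDconv x hx y hy (1/2) h12
    have e : x * y / ((1/2) * x + (1 - 1/2) * y) = 2 * x * y / (x + y) := by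
      rw [div_eq_div_iff (by linarith) hxy0.ne']
      ring
    rwa [e] at hmem
  set q := ((x - y) / (x * y)) ^ 2 with hqdef
  have hq0 : (0:ℝ) ≤ q := sq_nonneg _
  set Z := 2 * x * y / (x + y) with hZdef
  have hZ0 : (0:ℝ) < Z := hD hZD
  set U := Z * x / (t * Z + (1 - t) * x) with hUdef
  set V := y * Z / (t * y + (1 - t) * Z) with hVdef
  have hUD : U ∈ D := hDconv Z hZD x hx t ⟨ht0.le, ht1.le⟩
  have hVD : V ∈ D := hDconv y hy Z hZD t ⟨ht0.le, ht1.le⟩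
  have hU0 : (0:ℝ) < U := hD hUD
  have hV0 : (0:ℝ) < V := hD hVD
  have hd1 : (0:ℝ) < t * Z + (1 - t) * x := by positivity
  have hd2 : (0:ℝ) < t * y + (1 - t) * Z := by positivity
  have hd3 : (0:ℝ) < t * U + (1 - t) * V := by positivity
  -- reciprocal identities
  have hMinv : Z⁻¹ = (x⁻¹ + y⁻¹) / 2 := by
    rw [hZdef]
    rw [← one_div, one_div_div]
    field_simp
    ring
  have hUinv : U⁻¹ = t * x⁻¹ + (1 - t) * Z⁻¹ := by
    rw [hUdef]; exact harm_inv Z x t hZ0.ne' hx0.ne' hd1.ne'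
  have hVinv : V⁻¹ = t * Z⁻¹ + (1 - t) * y⁻¹ := by
    rw [hVdef]; exact harm_inv y Z t hy0.ne' hZ0.ne' hd2.ne'
  have hE1 : U * V / (t * U + (1 - t) * V) = Z := by
    have hinv : (U * V / (t * U + (1 - t) * V))⁻¹ = Z⁻¹ := by
      rw [harm_inv U V t hU0.ne' hV0.ne' hd3.ne', hUinv, hVinv]
      linear_combination (-2 * t * (1 - t)) * hMinv
    exact inv_injective hinv
  have hxyinv : (x - y) / (x * y) = y⁻¹ - x⁻¹ := by
    field_simp
  -- the three squared-difference identities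
  have hq1 : ((U - V) / (U * V)) ^ 2 = q / 4 := by
    have hdUV : (U - V) / (U * V) = V⁻¹ - U⁻¹ := by
      field_simp
    have hsq : V⁻¹ - U⁻¹ = (x - y) / (x * y) / 2 := by
      rw [hVinv, hUinv, hxyinv]
      linear_combination (2 * t - 1) * hMinv
    rw [hdUV, hsq, hqdef]; ring
  have hq2 : ((y - Z) / (y * Z)) ^ 2 = q / 4 := by
    have hdyZ : (y - Z) / (y * Z) = Z⁻¹ - y⁻¹ := by
      field_simp
    have hsq : Z⁻¹ - y⁻¹ = -((x - y) / (x * y) / 2) := by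
      rw [hMinv, hxyinv]; ring
    rw [hdyZ, hsq, hqdef]; ring
  have hq3 : ((Z - x) / (Z * x)) ^ 2 = q / 4 := by
    have hdZx : (Z - x) / (Z * x) = x⁻¹ - Z⁻¹ := by
      field_simp
    have hsq : x⁻¹ - Z⁻¹ = -((x - y) / (x * y) / 2) := by
      rw [hMinv, hxyinv]; ring
    rw [hdZx, hsq, hqdef]; ring
  -- the three applications of strong t-concavity
  set K := Metric.closedBall (0 : Y) 1 with hKdef
  have hKconv : Convex ℝ K := convex_closedBall _ _
  have hr0 : (0:ℝ) ≤ c * t * (1 - t) * (q / 4) := by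
    have : (0:ℝ) ≤ q / 4 := by linarith
    positivity
  have step1 : F Z + (c * t * (1 - t) * (q / 4)) • K ⊆ t • F V + (1 - t) • F U := by
    have h0 := hFstrong U hUD V hVD
    rwa [hE1, hq1] at h0
  have step2 : F V + (c * t * (1 - t) * (q / 4)) • K ⊆ t • F Z + (1 - t) • F y := by
    have h0 := hFstrong y hy Z hZD
    rwa [← hVdef, hq2] at h0
  have step3 : F U + (c * t * (1 - t) * (q / 4)) • K ⊆ t • F x + (1 - t) • F Z := by
    have h0 := hFstrong Z hZD x hx
    rwa [← hUdef, hq3] at h0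
  -- combine
  have main : F Z + (2 * (c * t * (1 - t) * (q / 4))) • K
      ⊆ (t * t + (1 - t) * (1 - t)) • F Z + ((t * (1 - t)) • F y + ((1 - t) * t) • F x) := by
    calc F Z + (2 * (c * t * (1 - t) * (q / 4))) • K
        = (F Z + (c * t * (1 - t) * (q / 4)) • K) + (c * t * (1 - t) * (q / 4)) • K := by
          rw [two_mul, hKconv.add_smul hr0 hr0, add_assoc]
      _ ⊆ (t • F V + (1 - t) • F U) + (c * t * (1 - t) * (q / 4)) • K :=
          add_subset_add step1 Subset.rfl
      _ = (t • F V + (t * (c * t * (1 - t) * (q / 4))) • K)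
            + ((1 - t) • F U + (((1 - t) * (c * t * (1 - t) * (q / 4)))) • K) := by
          rw [show (c * t * (1 - t) * (q / 4)) • K
              = (t * (c * t * (1 - t) * (q / 4))) • K
                + ((1 - t) * (c * t * (1 - t) * (q / 4))) • K by
            rw [← hKconv.add_smul (mul_nonneg ht0.le hr0) (mul_nonneg ht1'.le hr0)]
            congr 1
            ring]
          abel
      _ = t • (F V + (c * t * (1 - t) * (q / 4)) • K)
            + (1 - t) • (F U + (c * t * (1 - t) * (q / 4)) • K) := by
          rw [smul_add, smul_add, ← mul_smul, ← mul_smul]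
      _ ⊆ t • (t • F Z + (1 - t) • F y) + (1 - t) • (t • F x + (1 - t) • F Z) :=
          add_subset_add (smul_set_mono step2) (smul_set_mono step3)
      _ = ((t * t) • F Z + ((1 - t) * (1 - t)) • F Z)
            + ((t * (1 - t)) • F y + ((1 - t) * t) • F x) := by
          rw [smul_add, smul_add, ← mul_smul, ← mul_smul, ← mul_smul, ← mul_smul]
          abel
      _ = (t * t + (1 - t) * (1 - t)) • F Z + ((t * (1 - t)) • F y + ((1 - t) * t) • F x) := by
          rw [(hFconv Z hZD).add_smul (mul_nonneg ht0.le ht0.le) (mul_nonneg ht1'.le ht1'.le)]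
  have split : F Z = (2 * (t * (1 - t))) • F Z + (t * t + (1 - t) * (1 - t)) • F Z := by
    rw [← (hFconv Z hZD).add_smul (by nlinarith) (by nlinarith),
      show 2 * (t * (1 - t)) + (t * t + (1 - t) * (1 - t)) = 1 by ring, one_smul]
  have main2 : ((2 * (t * (1 - t))) • F Z + (2 * (c * t * (1 - t) * (q / 4))) • K)
        + (t * t + (1 - t) * (1 - t)) • F Z
      ⊆ ((t * (1 - t)) • F y + ((1 - t) * t) • F x)
        + (t * t + (1 - t) * (1 - t)) • F Z := by
    calc ((2 * (t * (1 - t))) • F Z + (2 * (c * t * (1 - t) * (q / 4))) • K)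
          + (t * t + (1 - t) * (1 - t)) • F Z
        = ((2 * (t * (1 - t))) • F Z + (t * t + (1 - t) * (1 - t)) • F Z)
            + (2 * (c * t * (1 - t) * (q / 4))) • K := by abel
      _ = F Z + (2 * (c * t * (1 - t) * (q / 4))) • K := by rw [← split]
      _ ⊆ (t * t + (1 - t) * (1 - t)) • F Z
            + ((t * (1 - t)) • F y + ((1 - t) * t) • F x) := main
      _ = ((t * (1 - t)) • F y + ((1 - t) * t) • F x)
            + (t * t + (1 - t) * (1 - t)) • F Z := by abel
  have cancel : (2 * (t * (1 - t))) • F Z + (2 * (c * t * (1 - t) * (q / 4))) • K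
      ⊆ (t * (1 - t)) • F y + ((1 - t) * t) • F x := by
    refine radstrom_cancel ?_ ?_ ?_ ?_ main2
    · exact (((hFcomp y hy).smul (t * (1 - t))).add ((hFcomp x hx).smul ((1 - t) * t))).isClosed
    · exact ((hFconv y hy).smul _).add ((hFconv x hx).smul _)
    · exact (hFne Z hZD).smul_set
    · exact ((hFcomp Z hZD).smul (t * t + (1 - t) * (1 - t))).isBounded
  -- rescale by (2 t (1 - t))⁻¹
  have hs0 : (0:ℝ) < t * (1 - t) := mul_pos ht0 ht1'
  have h2s : (0:ℝ) < 2 * (t * (1 - t)) := by linarith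
  have e1 : (2 * (t * (1 - t)))⁻¹ • ((2 * (t * (1 - t))) • F Z
        + (2 * (c * t * (1 - t) * (q / 4))) • K)
      = F Z + (c / 4 * q) • K := by
    rw [smul_add, ← mul_smul, ← mul_smul, inv_mul_cancel₀ h2s.ne', one_smul]
    congr 1
    rw [show (2 * (t * (1 - t)))⁻¹ * (2 * (c * t * (1 - t) * (q / 4))) = c / 4 * q by
      field_simp]
  have e2 : (2 * (t * (1 - t)))⁻¹ • ((t * (1 - t)) • F y + ((1 - t) * t) • F x)
      = (1 / 2 : ℝ) • F y + (1 / 2 : ℝ) • F x := by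
    rw [smul_add, ← mul_smul, ← mul_smul,
      show (2 * (t * (1 - t)))⁻¹ * (t * (1 - t)) = 1 / 2 by
        field_simp,
      show (2 * (t * (1 - t)))⁻¹ * ((1 - t) * t) = 1 / 2 by
        rw [show (1 - t) * t = t * (1 - t) by ring]
        field_simp]
  calc F Z + (c / 4 * q) • K
      = (2 * (t * (1 - t)))⁻¹ • ((2 * (t * (1 - t))) • F Z
          + (2 * (c * t * (1 - t) * (q / 4))) • K) := e1.symm
    _ ⊆ (2 * (t * (1 - t)))⁻¹ • ((t * (1 - t)) • F y + ((1 - t) * t) • F x) :=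
        smul_set_mono cancel
    _ = (1 / 2 : ℝ) • F y + (1 / 2 : ℝ) • F x := e2
end

section
/- Let Y be a real normed space, c > 0, and D ⊆ (0,∞) a harmonically convex set. If F : D → Set Y has nonempty compact convex values and is strongly harmonically midconcave with modulus c, then for all x, y ∈ D and all natural numbers k, n with 0 < k < 2ⁿ: F(xy/((k/2ⁿ)x + (1 − k/2ⁿ)y)) + c(k/2ⁿ)(1 − k/2ⁿ)((x−y)/(xy))²•B̄ ⊆ (k/2ⁿ)•F(y) + (1 − k/2ⁿ)•F(x). -/
open Pointwise Set

private lemma step_lemma {Y : Type*} [NormedAddCommGroup Y] [NormedSpace ℝ Y]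
    {Gu Gv Pa Pb Pm : Set Y} (hGu : Convex ℝ Gu) (hGv : Convex ℝ Gv)
    {a b cc d e : ℝ}
    (hmid : Pm + cc • Metric.closedBall (0:Y) 1 ⊆ (1/2 : ℝ) • Pb + (1/2 : ℝ) • Pa)
    (hA : Pa + d • Metric.closedBall (0:Y) 1 ⊆ a • Gv + (1 - a) • Gu)
    (hB : Pb + e • Metric.closedBall (0:Y) 1 ⊆ b • Gv + (1 - b) • Gu)
    (ha0 : 0 ≤ a) (ha1 : a ≤ 1) (hb0 : 0 ≤ b) (hb1 : b ≤ 1)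
    (hcc : 0 ≤ cc) (hd : 0 ≤ d) (he : 0 ≤ e) :
    Pm + (cc + 1/2 * d + 1/2 * e) • Metric.closedBall (0:Y) 1
      ⊆ ((a + b)/2) • Gv + (1 - (a + b)/2) • Gu := by
  have hBconv : Convex ℝ (Metric.closedBall (0:Y) 1) := convex_closedBall 0 1
  calc Pm + (cc + 1/2 * d + 1/2 * e) • Metric.closedBall (0:Y) 1
      = (Pm + cc • Metric.closedBall (0:Y) 1)
          + ((1/2:ℝ) • (d • Metric.closedBall (0:Y) 1)
            + (1/2:ℝ) • (e • Metric.closedBall (0:Y) 1)) := by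
        have h1 : (cc + 1/2 * d + 1/2 * e) • Metric.closedBall (0:Y) 1
            = cc • Metric.closedBall (0:Y) 1 + (1/2*d) • Metric.closedBall (0:Y) 1
              + (1/2*e) • Metric.closedBall (0:Y) 1 := by
          rw [hBconv.add_smul (by linarith) (by linarith), hBconv.add_smul hcc (by linarith)]
        rw [h1, smul_smul, smul_smul]
        abel
    _ ⊆ ((1/2:ℝ) • Pb + (1/2:ℝ) • Pa)
          + ((1/2:ℝ) • (d • Metric.closedBall (0:Y) 1)
            + (1/2:ℝ) • (e • Metric.closedBall (0:Y) 1)) :=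
        Set.add_subset_add hmid (Set.Subset.refl _)
    _ = (1/2:ℝ) • (Pa + d • Metric.closedBall (0:Y) 1)
          + (1/2:ℝ) • (Pb + e • Metric.closedBall (0:Y) 1) := by
        rw [smul_add, smul_add]
        abel
    _ ⊆ (1/2:ℝ) • (a • Gv + (1 - a) • Gu) + (1/2:ℝ) • (b • Gv + (1 - b) • Gu) :=
        Set.add_subset_add (Set.smul_set_mono hA) (Set.smul_set_mono hB)
    _ = ((a + b)/2) • Gv + (1 - (a + b)/2) • Gu := by
        rw [smul_add, smul_add, smul_smul, smul_smul, smul_smul, smul_smul]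
        rw [show (1 - (a + b)/2 : ℝ) = 1/2*(1-a) + 1/2*(1-b) by ring,
            show ((a + b)/2 : ℝ) = 1/2*a + 1/2*b by ring,
            hGv.add_smul (by linarith) (by linarith), hGu.add_smul (by linarith) (by linarith)]
        abel

private lemma aux_dyadic {Y : Type*} [NormedAddCommGroup Y] [NormedSpace ℝ Y]
    (c : ℝ) (hc : 0 ≤ c) (G : ℝ → Set Y) (E : Set ℝ)
    (hne : ∀ u ∈ E, (G u).Nonempty)
    (hconv : ∀ u ∈ E, Convex ℝ (G u))
    (hEseg : ∀ u ∈ E, ∀ v ∈ E, ∀ s ∈ Set.Icc (0:ℝ) 1, s * v + (1 - s) * u ∈ E)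
    (hmid : ∀ u ∈ E, ∀ v ∈ E,
      G ((u + v) / 2) + (c / 4 * (u - v) ^ 2) • Metric.closedBall (0:Y) 1
        ⊆ (1/2 : ℝ) • G v + (1/2 : ℝ) • G u)
    (u : ℝ) (hu : u ∈ E) (v : ℝ) (hv : v ∈ E) :
    ∀ n k : ℕ, k ≤ 2 ^ n →
      G (((k:ℝ)/2^n) * v + (1 - (k:ℝ)/2^n) * u)
        + (c * ((k:ℝ)/2^n) * (1 - (k:ℝ)/2^n) * (v - u)^2) • Metric.closedBall (0:Y) 1
      ⊆ ((k:ℝ)/2^n) • G v + (1 - (k:ℝ)/2^n) • G u := by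
  have hBne : (Metric.closedBall (0:Y) 1).Nonempty := Metric.nonempty_closedBall.mpr zero_le_one
  have endpoint : ∀ t : ℝ, t = 0 ∨ t = 1 →
      G (t * v + (1 - t) * u)
          + (c * t * (1 - t) * (v - u)^2) • Metric.closedBall (0:Y) 1
        ⊆ t • G v + (1 - t) • G u := by
    rintro t (rfl | rfl)
    · rw [show (0:ℝ) * v + (1 - 0) * u = u by ring,
        show c * 0 * (1 - 0) * (v - u)^2 = 0 by ring,
        Set.zero_smul_set hBne, add_zero, Set.zero_smul_set (hne v hv), zero_add,
        sub_zero, one_smul]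
    · rw [show (1:ℝ) * v + (1 - 1) * u = v by ring,
        show c * 1 * (1 - 1) * (v - u)^2 = 0 by ring,
        Set.zero_smul_set hBne, add_zero, sub_self, Set.zero_smul_set (hne u hu),
        add_zero, one_smul]
  have endpoint' : ∀ N k : ℕ, k = 0 ∨ k = 2 ^ N →
      G (((k:ℝ)/2^N) * v + (1 - (k:ℝ)/2^N) * u)
        + (c * ((k:ℝ)/2^N) * (1 - (k:ℝ)/2^N) * (v - u)^2) • Metric.closedBall (0:Y) 1
      ⊆ ((k:ℝ)/2^N) • G v + (1 - (k:ℝ)/2^N) • G u := by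
    rintro N k (rfl | rfl)
    · rw [show ((0:ℕ):ℝ)/2^N = 0 by simp]
      exact endpoint 0 (Or.inl rfl)
    · rw [show (((2^N:ℕ)):ℝ)/2^N = 1 by push_cast; exact div_self (by positivity)]
      exact endpoint 1 (Or.inr rfl)
  intro n
  induction n with
  | zero =>
      intro k hk
      rw [pow_zero] at hk
      interval_cases k
      · exact endpoint' 0 0 (Or.inl rfl)
      · exact endpoint' 0 1 (Or.inr (by norm_num))
  | succ n ih =>
      intro k hk
      rcases Nat.eq_zero_or_pos k with rfl | hkpos
      · exact endpoint' (n+1) 0 (Or.inl rfl)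
      rcases hk.lt_or_eq with hklt | rfl
      swap
      · exact endpoint' (n+1) (2^(n+1)) (Or.inr rfl)
      have h2 : (2:ℕ)^(n+1) = 2^n * 2 := pow_succ 2 n
      rcases Nat.even_or_odd k with ⟨m, rfl⟩ | ⟨m, rfl⟩
      · -- even : k = m + m
        have hm2 : m ≤ 2^n := by omega
        have hp2n : ((2:ℝ))^n ≠ 0 := by positivity
        have ht : ((m+m:ℕ):ℝ)/2^(n+1) = (m:ℝ)/2^n := by
          push_cast
          rw [pow_succ]
          field_simp
          ring
        rw [ht]
        exact ih m hm2
      · -- odd : k = 2*m+1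
        have hmn : m ≤ 2^n := by omega
        have hmn1 : m + 1 ≤ 2^n := by omega
        have hp2n : (0:ℝ) < 2^n := by positivity
        have ih_a := ih m hmn
        have ih_b := ih (m+1) hmn1
        rw [Nat.cast_add, Nat.cast_one] at ih_b
        set a : ℝ := (m:ℝ)/2^n with ha
        set b : ℝ := ((m:ℝ)+1)/2^n with hb
        have ha0 : 0 ≤ a := by rw [ha]; positivity
        have ha1 : a ≤ 1 := by rw [ha, div_le_one hp2n]; exact_mod_cast hmn
        have hb0 : 0 ≤ b := by rw [hb]; positivity
        have hb1 : b ≤ 1 := by rw [hb, div_le_one hp2n]; exact_mod_cast hmn1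
        have hpa : a * v + (1 - a) * u ∈ E := hEseg u hu v hv a ⟨ha0, ha1⟩
        have hpb : b * v + (1 - b) * u ∈ E := hEseg u hu v hv b ⟨hb0, hb1⟩
        have hmidab := hmid _ hpa _ hpb
        have key := step_lemma (hconv u hu) (hconv v hv) hmidab ih_a ih_b
          ha0 ha1 hb0 hb1
          (mul_nonneg (by linarith) (sq_nonneg _))
          (mul_nonneg (mul_nonneg (mul_nonneg hc ha0) (by linarith)) (sq_nonneg _))
          (mul_nonneg (mul_nonneg (mul_nonneg hc hb0) (by linarith)) (sq_nonneg _))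
        have e1 : ((2*m+1:ℕ):ℝ)/2^(n+1) = (a+b)/2 := by
          rw [ha, hb]
          push_cast
          rw [pow_succ]
          field_simp
          ring
        rw [e1]
        have e2 : ((a*v+(1-a)*u) + (b*v+(1-b)*u))/2 = ((a+b)/2)*v + (1-(a+b)/2)*u := by
          ring
        have e3 : c*((a+b)/2)*(1-(a+b)/2)*(v-u)^2
            = c / 4 * (a*v+(1-a)*u - (b*v+(1-b)*u))^2
              + 1/2 * (c * a * (1 - a) * (v - u)^2)
              + 1/2 * (c * b * (1 - b) * (v - u)^2) := by ring
        rw [← e2, e3]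
        exact key

/-- Dyadic inclusions for a strongly harmonically midconcave
set-valued function with nonempty compact convex values. -/
theorem dyadic_midconcave
    {Y : Type*} [NormedAddCommGroup Y] [NormedSpace ℝ Y]
    (c : ℝ) (hc : 0 < c)
    (D : Set ℝ) (hD : D ⊆ Set.Ioi (0 : ℝ))
    (hDconv : ∀ x ∈ D, ∀ y ∈ D, ∀ s ∈ Set.Icc (0 : ℝ) 1,
      x * y / (s * x + (1 - s) * y) ∈ D)
    (F : ℝ → Set Y)
    (hFne : ∀ x ∈ D, (F x).Nonempty)
    (hFcomp : ∀ x ∈ D, IsCompact (F x))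
    (hFconv : ∀ x ∈ D, Convex ℝ (F x))
    (hFmid : ∀ x ∈ D, ∀ y ∈ D,
      F (2 * x * y / (x + y))
          + (c / 4 * ((x - y) / (x * y)) ^ 2) • Metric.closedBall (0 : Y) 1
        ⊆ (1 / 2 : ℝ) • F y + (1 / 2 : ℝ) • F x) :
    ∀ x ∈ D, ∀ y ∈ D, ∀ k n : ℕ, 0 < k → k < 2 ^ n →
      F (x * y / (((k : ℝ) / 2 ^ n) * x + (1 - (k : ℝ) / 2 ^ n) * y))
          + (c * ((k : ℝ) / 2 ^ n) * (1 - (k : ℝ) / 2 ^ n) * ((x - y) / (x * y)) ^ 2)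
              • Metric.closedBall (0 : Y) 1
        ⊆ ((k : ℝ) / 2 ^ n) • F y + (1 - (k : ℝ) / 2 ^ n) • F x := by
  intro x hx y hy k n hk0 hkn
  have hposcomb : ∀ p q s : ℝ, 0 < p → 0 < q → 0 ≤ s → s ≤ 1 → 0 < s * p + (1 - s) * q := by
    intro p q s hp hq hs0 hs1
    rcases hs0.lt_or_eq with h | h
    · have h1 : 0 < s * p := mul_pos h hp
      have h2 : 0 ≤ (1 - s) * q := mul_nonneg (by linarith) hq.le
      linarith
    · rw [← h]; simpa using hq
  set E : Set ℝ := {w : ℝ | 0 < w ∧ w⁻¹ ∈ D} with hE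
  have hxpos : 0 < x := hD hx
  have hypos : 0 < y := hD hy
  have hxE : x⁻¹ ∈ E := ⟨inv_pos.mpr hxpos, by rw [inv_inv]; exact hx⟩
  have hyE : y⁻¹ ∈ E := ⟨inv_pos.mpr hypos, by rw [inv_inv]; exact hy⟩
  have hne : ∀ u ∈ E, (F u⁻¹).Nonempty := fun u hu => hFne _ hu.2
  have hconv : ∀ u ∈ E, Convex ℝ (F u⁻¹) := fun u hu => hFconv _ hu.2
  have hEseg : ∀ u ∈ E, ∀ v ∈ E, ∀ s ∈ Set.Icc (0:ℝ) 1, s * v + (1 - s) * u ∈ E := by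
    rintro u ⟨hu0, huD⟩ v ⟨hv0, hvD⟩ s ⟨hs0, hs1⟩
    have hw0 : 0 < s * v + (1 - s) * u := hposcomb v u s hv0 hu0 hs0 hs1
    refine ⟨hw0, ?_⟩
    have hkey : (s * v + (1 - s) * u)⁻¹ = u⁻¹ * v⁻¹ / (s * u⁻¹ + (1 - s) * v⁻¹) := by
      have hd0 : 0 < s * u⁻¹ + (1 - s) * v⁻¹ :=
        hposcomb u⁻¹ v⁻¹ s (inv_pos.mpr hu0) (inv_pos.mpr hv0) hs0 hs1
      field_simp
    rw [hkey]
    exact hDconv _ huD _ hvD s ⟨hs0, hs1⟩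
  have hmid : ∀ u ∈ E, ∀ v ∈ E,
      F (((u + v) / 2)⁻¹) + (c / 4 * (u - v) ^ 2) • Metric.closedBall (0:Y) 1
        ⊆ (1/2 : ℝ) • F v⁻¹ + (1/2 : ℝ) • F u⁻¹ := by
    rintro u ⟨hu0, huD⟩ v ⟨hv0, hvD⟩
    have h1 : ((u + v) / 2)⁻¹ = 2 * u⁻¹ * v⁻¹ / (u⁻¹ + v⁻¹) := by
      have huv : 0 < u + v := by linarith
      have hiv : 0 < u⁻¹ + v⁻¹ := by positivity
      field_simp
      ring
    have h2 : c / 4 * ((u⁻¹ - v⁻¹) / (u⁻¹ * v⁻¹)) ^ 2 = c / 4 * (u - v) ^ 2 := by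
      rw [show (u⁻¹ - v⁻¹) / (u⁻¹ * v⁻¹) = v - u by field_simp]
      ring
    have hm := hFmid _ huD _ hvD
    rw [← h1, h2] at hm
    exact hm
  have main := aux_dyadic c hc.le (fun w => F w⁻¹) E hne hconv hEseg hmid
    x⁻¹ hxE y⁻¹ hyE n k hkn.le
  simp only [inv_inv] at main
  have g1 : x * y / (((k : ℝ) / 2 ^ n) * x + (1 - (k : ℝ) / 2 ^ n) * y)
      = (((k : ℝ) / 2 ^ n) * y⁻¹ + (1 - (k : ℝ) / 2 ^ n) * x⁻¹)⁻¹ := by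
    have ht0 : (0:ℝ) ≤ (k : ℝ) / 2 ^ n := by positivity
    have ht1 : (k : ℝ) / 2 ^ n ≤ 1 := by
      rw [div_le_one (by positivity)]
      exact_mod_cast hkn.le
    have hda : 0 < ((k : ℝ) / 2 ^ n) * x + (1 - (k : ℝ) / 2 ^ n) * y :=
      hposcomb x y _ hxpos hypos ht0 ht1
    have hdb : 0 < ((k : ℝ) / 2 ^ n) * y⁻¹ + (1 - (k : ℝ) / 2 ^ n) * x⁻¹ :=
      hposcomb y⁻¹ x⁻¹ _ (inv_pos.mpr hypos) (inv_pos.mpr hxpos) ht0 ht1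
    rw [show ((k : ℝ) / 2 ^ n) * y⁻¹ + (1 - (k : ℝ) / 2 ^ n) * x⁻¹
        = (((k : ℝ) / 2 ^ n) * x + (1 - (k : ℝ) / 2 ^ n) * y) / (x * y) by
      field_simp, inv_div]
  have g2 : (x - y) / (x * y) = y⁻¹ - x⁻¹ := by
    field_simp
  rw [g1, g2]
  exact main
end

section
/- (Bernstein–Doetsch type theorem for the case m = 1) Let Y be a real normed space, c > 0, and D ⊆ (0,∞) a harmonically convex set. If F : D → Set Y has nonempty compact convex values, is strongly harmonically midconcave with modulus c, and is upper semicontinuous on D, then F is strongly harmonically concave with modulus c: for all x, y ∈ D and all t ∈ [0,1], F(xy/(tx+(1-t)y)) + ct(1-t)((x−y)/(xy))²•B̄ ⊆ t•F(y) + (1-t)•F(x). -/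
open Pointwise Set Metric

lemma ball_smul' {Y : Type*} [NormedAddCommGroup Y] [NormedSpace ℝ Y]
    (r : ℝ) (hr : 0 ≤ r) :
    r • Metric.closedBall (0 : Y) 1 = Metric.closedBall (0 : Y) r := by
  rw [smul_closedBall r (0:Y) zero_le_one, smul_zero, Real.norm_eq_abs,
    abs_of_nonneg hr, mul_one]

lemma key_mid {Y : Type*} [NormedAddCommGroup Y] [NormedSpace ℝ Y]
    {c u v a b : ℝ} (hc : 0 ≤ c) (ha : a ∈ Set.Icc (0:ℝ) 1) (hb : b ∈ Set.Icc (0:ℝ) 1)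
    {GA GB : Set Y} (hGA : Convex ℝ GA) (hGB : Convex ℝ GB)
    (G : ℝ → Set Y)
    (hmid : G (((a*u+(1-a)*v) + (b*u+(1-b)*v))/2)
        + (c/4 * ((a*u+(1-a)*v) - (b*u+(1-b)*v))^2) • Metric.closedBall (0:Y) 1
      ⊆ (1/2:ℝ) • G (a*u+(1-a)*v) + (1/2:ℝ) • G (b*u+(1-b)*v))
    (hA : G (a*u+(1-a)*v) + (c*a*(1-a)*(u-v)^2) • Metric.closedBall (0:Y) 1 ⊆ a • GA + (1-a) • GB)
    (hB : G (b*u+(1-b)*v) + (c*b*(1-b)*(u-v)^2) • Metric.closedBall (0:Y) 1 ⊆ b • GA + (1-b) • GB) :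
    G (((a+b)/2)*u+(1-(a+b)/2)*v)
        + (c*((a+b)/2)*(1-(a+b)/2)*(u-v)^2) • Metric.closedBall (0:Y) 1
      ⊆ ((a+b)/2) • GA + (1-(a+b)/2) • GB := by
  obtain ⟨ha0, ha1⟩ := ha
  obtain ⟨hb0, hb1⟩ := hb
  have h1a : (0:ℝ) ≤ 1 - a := by linarith
  have h1b : (0:ℝ) ≤ 1 - b := by linarith
  have hBc : Convex ℝ (Metric.closedBall (0:Y) 1) := convex_closedBall 0 1
  set B1 : Set Y := Metric.closedBall (0:Y) 1 with hB1
  have hr1 : (0:ℝ) ≤ c/4 * (a-b)^2 * (u-v)^2 := by positivity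
  have hr2 : (0:ℝ) ≤ 1/2 * (c*a*(1-a)*(u-v)^2) :=
    mul_nonneg (by norm_num)
      (mul_nonneg (mul_nonneg (mul_nonneg hc ha0) h1a) (sq_nonneg _))
  have hr3 : (0:ℝ) ≤ 1/2 * (c*b*(1-b)*(u-v)^2) :=
    mul_nonneg (by norm_num)
      (mul_nonneg (mul_nonneg (mul_nonneg hc hb0) h1b) (sq_nonneg _))
  have hsplit : (c*((a+b)/2)*(1-(a+b)/2)*(u-v)^2) • B1
      = (c/4 * (a-b)^2 * (u-v)^2) • B1
        + ((1/2 * (c*a*(1-a)*(u-v)^2)) • B1 + (1/2 * (c*b*(1-b)*(u-v)^2)) • B1) := by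
    rw [← hBc.add_smul hr2 hr3, ← hBc.add_smul hr1 (by linarith)]
    congr 1
    ring
  have hpm : ((a*u+(1-a)*v) + (b*u+(1-b)*v))/2 = ((a+b)/2)*u+(1-(a+b)/2)*v := by ring
  have hps : c/4 * ((a*u+(1-a)*v) - (b*u+(1-b)*v))^2 = c/4 * (a-b)^2 * (u-v)^2 := by ring
  rw [hpm, hps] at hmid
  have e1 : (a+b)/2 = a/2 + b/2 := by ring
  have e2 : 1-(a+b)/2 = (1-a)/2 + (1-b)/2 := by ring
  calc G (((a+b)/2)*u+(1-(a+b)/2)*v) + (c*((a+b)/2)*(1-(a+b)/2)*(u-v)^2) • B1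
      = (G (((a+b)/2)*u+(1-(a+b)/2)*v) + (c/4 * (a-b)^2 * (u-v)^2) • B1)
        + ((1/2 * (c*a*(1-a)*(u-v)^2)) • B1 + (1/2 * (c*b*(1-b)*(u-v)^2)) • B1) := by
        rw [hsplit]; abel
    _ ⊆ ((1/2:ℝ) • G (a*u+(1-a)*v) + (1/2:ℝ) • G (b*u+(1-b)*v))
        + ((1/2 * (c*a*(1-a)*(u-v)^2)) • B1 + (1/2 * (c*b*(1-b)*(u-v)^2)) • B1) :=
        Set.add_subset_add_right hmid
    _ = (1/2:ℝ) • (G (a*u+(1-a)*v) + (c*a*(1-a)*(u-v)^2) • B1)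
        + (1/2:ℝ) • (G (b*u+(1-b)*v) + (c*b*(1-b)*(u-v)^2) • B1) := by
        rw [smul_add, smul_add, smul_smul, smul_smul]
        abel
    _ ⊆ (1/2:ℝ) • (a • GA + (1-a) • GB) + (1/2:ℝ) • (b • GA + (1-b) • GB) :=
        Set.add_subset_add (Set.smul_set_mono hA) (Set.smul_set_mono hB)
    _ = ((a/2) • GA + (b/2) • GA) + (((1-a)/2) • GB + ((1-b)/2) • GB) := by
        rw [smul_add, smul_add, smul_smul, smul_smul, smul_smul, smul_smul]
        rw [show (1:ℝ)/2 * a = a/2 by ring, show (1:ℝ)/2 * b = b/2 by ring,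
          show (1:ℝ)/2 * (1-a) = (1-a)/2 by ring, show (1:ℝ)/2 * (1-b) = (1-b)/2 by ring]
        abel
    _ = ((a+b)/2) • GA + (1-(a+b)/2) • GB := by
        rw [e2, e1, hGA.add_smul (by linarith) (by linarith),
          hGB.add_smul (by linarith) (by linarith)]

lemma mem_rball {Y : Type*} [NormedAddCommGroup Y] [NormedSpace ℝ Y]
    {r : ℝ} (hr : 0 ≤ r) {w : Y} :
    w ∈ r • Metric.closedBall (0 : Y) 1 ↔ ‖w‖ ≤ r := by
  rw [ball_smul' r hr, Metric.mem_closedBall, dist_zero_right]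

lemma ball_approx {Y : Type*} [NormedAddCommGroup Y] [NormedSpace ℝ Y]
    {r s : ℝ} (hr : 0 ≤ r) (hs : 0 ≤ s) :
    r • Metric.closedBall (0 : Y) 1
      ⊆ s • Metric.closedBall (0 : Y) 1 + |r - s| • Metric.closedBall (0 : Y) 1 := by
  rcases le_total r s with h | h
  · intro w hw
    exact ⟨w, (mem_rball hs).2 (le_trans ((mem_rball hr).1 hw) h),
      0, (mem_rball (abs_nonneg _)).2 (by simp), add_zero w⟩
  · have : r • Metric.closedBall (0 : Y) 1
        = s • Metric.closedBall (0 : Y) 1 + (r - s) • Metric.closedBall (0 : Y) 1 := by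
      rw [← (convex_closedBall (0:Y) 1).add_smul hs (by linarith)]
      congr 1; ring
    rw [this, abs_of_nonneg (by linarith : (0:ℝ) ≤ r - s)]


set_option maxHeartbeats 1000000 in
lemma aux_concave {Y : Type*} [NormedAddCommGroup Y] [NormedSpace ℝ Y]
    (c : ℝ) (hc : 0 < c)
    (E : Set ℝ)
    (hE : ∀ u ∈ E, ∀ v ∈ E, ∀ s ∈ Set.Icc (0:ℝ) 1, s*u + (1-s)*v ∈ E)
    (G : ℝ → Set Y)
    (hGne : ∀ u ∈ E, (G u).Nonempty)
    (hGcomp : ∀ u ∈ E, IsCompact (G u))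
    (hGconv : ∀ u ∈ E, Convex ℝ (G u))
    (hGmid : ∀ u ∈ E, ∀ v ∈ E,
      G ((u+v)/2) + (c/4 * (u-v)^2) • Metric.closedBall (0:Y) 1
        ⊆ (1/2:ℝ) • G u + (1/2:ℝ) • G v)
    (hGusc : ∀ u₀ ∈ E, ∀ ε > (0:ℝ), ∃ δ > (0:ℝ), ∀ u ∈ E, |u - u₀| < δ →
      G u₀ ⊆ G u + ε • Metric.closedBall (0:Y) 1) :
    ∀ u ∈ E, ∀ v ∈ E, ∀ t ∈ Set.Icc (0:ℝ) 1,
      G (t*u + (1-t)*v) + (c*t*(1-t)*(u-v)^2) • Metric.closedBall (0:Y) 1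
        ⊆ t • G u + (1-t) • G v := by
  intro u hu v hv
  have hpt : ∀ s ∈ Set.Icc (0:ℝ) 1, s*u+(1-s)*v ∈ E := fun s hs => hE u hu v hv s hs
  have hBne : (Metric.closedBall (0:Y) 1).Nonempty := Metric.nonempty_closedBall.2 zero_le_one
  -- base cases
  have base0 : G ((0:ℝ)*u + (1-0)*v) + (c*0*(1-0)*(u-v)^2) • Metric.closedBall (0:Y) 1
      ⊆ (0:ℝ) • G u + (1-(0:ℝ)) • G v := by
    have h1 : (0:ℝ)*u+(1-0)*v = v := by ring
    have h2 : c*0*(1-0)*(u-v)^2 = 0 := by ring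
    rw [h1, h2, zero_smul_set hBne, zero_smul_set (hGne u hu)]
    norm_num
  have base1 : G ((1:ℝ)*u + (1-1)*v) + (c*1*(1-1)*(u-v)^2) • Metric.closedBall (0:Y) 1
      ⊆ (1:ℝ) • G u + (1-(1:ℝ)) • G v := by
    have h1 : (1:ℝ)*u+(1-1)*v = u := by ring
    have h2 : c*1*(1-1)*(u-v)^2 = 0 := by ring
    rw [h1, h2, zero_smul_set hBne, sub_self, zero_smul_set (hGne v hv)]
    norm_num
  -- dyadic case
  have dyadic : ∀ n : ℕ, ∀ k : ℕ, k ≤ 2^n →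
      G (((k:ℝ)/2^n)*u + (1-(k:ℝ)/2^n)*v)
          + (c*((k:ℝ)/2^n)*(1-(k:ℝ)/2^n)*(u-v)^2) • Metric.closedBall (0:Y) 1
        ⊆ ((k:ℝ)/2^n) • G u + (1-(k:ℝ)/2^n) • G v := by
    intro n
    induction n with
    | zero =>
      intro k hk
      interval_cases k
      · simpa using base0
      · simpa using base1
    | succ n ih =>
      intro k hk
      have hmem : ∀ m : ℕ, m ≤ 2^n → (m:ℝ)/2^n ∈ Set.Icc (0:ℝ) 1 := by
        intro m hm
        constructor
        · positivity
        · rw [div_le_one (by positivity)]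
          exact_mod_cast Nat.cast_le.2 hm
      set i := (k+1)/2 with hidef
      set j := k/2 with hjdef
      have h2n : 2^(n+1) = 2*2^n := by ring
      have hij : i + j = k := by omega
      have hi : i ≤ 2^n := by omega
      have hj : j ≤ 2^n := by omega
      have ha := ih i hi
      have hb := ih j hj
      have hmemi := hmem i hi
      have hmemj := hmem j hj
      have hpa := hpt _ hmemi
      have hpb := hpt _ hmemj
      have hmid := hGmid _ hpa _ hpb
      have hres := key_mid hc.le hmemi hmemj (hGconv u hu) (hGconv v hv) G hmid ha hb
      have heq : ((i:ℝ)/2^n + (j:ℝ)/2^n)/2 = (k:ℝ)/2^(n+1) := by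
        have : ((k:ℕ):ℝ) = (i:ℝ) + (j:ℝ) := by exact_mod_cast congrArg (Nat.cast : ℕ → ℝ) hij.symm
        rw [this]
        field_simp
        ring_nf
        try tauto
      rw [heq] at hres
      exact hres
  -- limit step
  intro t ht
  obtain ⟨ht0, ht1⟩ := ht
  have hGuC := hGcomp u hu
  have hGvC := hGcomp v hv
  have hTcomp : IsCompact (t • G u + (1-t) • G v) := (hGuC.smul t).add (hGvC.smul (1-t))
  intro z hz
  have hclose : z ∈ closure (t • G u + (1-t) • G v) := by
    rw [Metric.mem_closure_iff]
    intro ε hε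
    obtain ⟨Mu, hMu⟩ := hGuC.isBounded.exists_norm_le
    obtain ⟨Mv, hMv⟩ := hGvC.isBounded.exists_norm_le
    obtain ⟨a₀, ha₀⟩ := hGne u hu
    obtain ⟨b₀, hb₀⟩ := hGne v hv
    have hMu0 : 0 ≤ Mu := le_trans (norm_nonneg a₀) (hMu a₀ ha₀)
    have hMv0 : 0 ≤ Mv := le_trans (norm_nonneg b₀) (hMv b₀ hb₀)
    have hptE : t*u+(1-t)*v ∈ E := hpt t ⟨ht0, ht1⟩
    obtain ⟨δ, hδ0, hδ⟩ := hGusc _ hptE (ε/8) (by positivity)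
    set η : ℝ := min (δ/(|u-v|+1)) (min (ε/(8*(c*(u-v)^2+1))) (ε/(8*(Mu+Mv+1)))) with hηdef
    have hη0 : 0 < η := lt_min (by positivity) (lt_min (by positivity) (by positivity))
    have hη1 : η ≤ δ/(|u-v|+1) := min_le_left _ _
    have hη2 : η ≤ ε/(8*(c*(u-v)^2+1)) := le_trans (min_le_right _ _) (min_le_left _ _)
    have hη3 : η ≤ ε/(8*(Mu+Mv+1)) := le_trans (min_le_right _ _) (min_le_right _ _)
    obtain ⟨n, hn⟩ := exists_pow_lt_of_lt_one hη0 (by norm_num : (1:ℝ)/2 < 1)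
    have h2npos : (0:ℝ) < 2^n := by positivity
    set k : ℕ := ⌊t * 2^n⌋₊ with hkdef
    have hk2 : k ≤ 2^n := by
      have h1 : t * 2^n ≤ ((2^n : ℕ):ℝ) := by push_cast; nlinarith
      calc k = ⌊t*2^n⌋₊ := rfl
        _ ≤ ⌊((2^n:ℕ):ℝ)⌋₊ := Nat.floor_le_floor h1
        _ = 2^n := Nat.floor_natCast _
    set s : ℝ := (k:ℝ)/2^n with hsdef
    have hs0 : 0 ≤ s := by positivity
    have hs1 : s ≤ 1 := by
      rw [hsdef, div_le_one h2npos]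
      exact_mod_cast hk2
    have hfl1 : (k:ℝ) ≤ t*2^n := Nat.floor_le (by positivity)
    have hfl2 : t*2^n < (k:ℝ)+1 := Nat.lt_floor_add_one _
    have hs_le_t : s ≤ t := by rw [hsdef, div_le_iff₀ h2npos]; linarith
    have hst' : |s - t| < (1/2:ℝ)^n := by
      rw [abs_of_nonpos (by linarith), neg_sub]
      have ht_lt : t < ((k:ℝ)+1)/2^n := (lt_div_iff₀ h2npos).2 (by linarith)
      have hpow : (1/2:ℝ)^n = 1/2^n := by rw [div_pow, one_pow]
      rw [hsdef, hpow]
      have : ((k:ℝ)+1)/2^n = (k:ℝ)/2^n + 1/2^n := by ring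
      linarith [ht_lt, this ▸ ht_lt]
    have hst : |s - t| < η := lt_trans hst' hn
    -- decompose z
    obtain ⟨g, hg, w, hw, hzgw⟩ := Set.mem_add.1 hz
    have hrt0 : (0:ℝ) ≤ c*t*(1-t)*(u-v)^2 :=
      mul_nonneg (mul_nonneg (mul_nonneg hc.le ht0) (by linarith)) (sq_nonneg _)
    have hrs0 : (0:ℝ) ≤ c*s*(1-s)*(u-v)^2 :=
      mul_nonneg (mul_nonneg (mul_nonneg hc.le hs0) (by linarith)) (sq_nonneg _)
    have hpsE : s*u+(1-s)*v ∈ E := hpt s ⟨hs0, hs1⟩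
    have hdist : |(s*u+(1-s)*v) - (t*u+(1-t)*v)| < δ := by
      have h1 : (s*u+(1-s)*v) - (t*u+(1-t)*v) = (s-t)*(u-v) := by ring
      rw [h1, abs_mul]
      have h2 : |s-t| * |u-v| ≤ |s-t| *(|u-v|+1) :=
        mul_le_mul_of_nonneg_left (by linarith) (abs_nonneg _)
      have h3 : |s-t| *(|u-v|+1) < η*(|u-v|+1) :=
        mul_lt_mul_of_pos_right hst (by positivity)
      have h4 : η*(|u-v|+1) ≤ (δ/(|u-v|+1))*(|u-v|+1) :=
        mul_le_mul_of_nonneg_right hη1 (by positivity)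
      have h5 : (δ/(|u-v|+1))*(|u-v|+1) = δ := by field_simp
      linarith
    obtain ⟨g', hg', e, he, hgdecomp⟩ := Set.mem_add.1 (hδ _ hpsE hdist hg)
    have hew : ‖e‖ ≤ ε/8 := (mem_rball (by positivity)).1 he
    have hw' := ball_approx hrt0 hrs0 hw
    obtain ⟨w1, hw1, w2, hw2, hwdecomp⟩ := Set.mem_add.1 hw'
    have habs : |c*t*(1-t)*(u-v)^2 - c*s*(1-s)*(u-v)^2| ≤ ε/8 := by
      have h1 : c*t*(1-t)*(u-v)^2 - c*s*(1-s)*(u-v)^2 = (t-s)*((1-t-s)*(c*(u-v)^2)) := by ring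
      rw [h1, abs_mul, abs_mul]
      have h2 : |1-t-s| ≤ 1 := by rw [abs_le]; constructor <;> linarith
      have h3 : |c*(u-v)^2| = c*(u-v)^2 := abs_of_nonneg (by positivity)
      have h4 : |t-s| *(|1-t-s| * |c*(u-v)^2|) ≤ |t-s| *(c*(u-v)^2+1) := by
        rw [h3]
        have := mul_le_mul_of_nonneg_right h2 (by positivity : (0:ℝ) ≤ c*(u-v)^2)
        have h5 : |1-t-s| *(c*(u-v)^2) ≤ c*(u-v)^2+1 := by linarith
        exact mul_le_mul_of_nonneg_left h5 (abs_nonneg _)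
      have h6 : |t-s| = |s-t| := abs_sub_comm t s
      have h7 : |t-s| *(c*(u-v)^2+1) < η*(c*(u-v)^2+1) := by
        rw [h6]; exact mul_lt_mul_of_pos_right hst (by positivity)
      have h8 : η*(c*(u-v)^2+1) ≤ (ε/(8*(c*(u-v)^2+1)))*(c*(u-v)^2+1) :=
        mul_le_mul_of_nonneg_right hη2 (by positivity)
      have h9 : (ε/(8*(c*(u-v)^2+1)))*(c*(u-v)^2+1) = ε/8 := by field_simp
      linarith
    have hw2n : ‖w2‖ ≤ ε/8 := le_trans ((mem_rball (abs_nonneg _)).1 hw2) habs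
    have hincl := dyadic n k hk2
    rw [← hsdef] at hincl
    obtain ⟨sa, hsa, sb, hsb, hsab⟩ := Set.mem_add.1 (hincl (Set.add_mem_add hg' hw1))
    obtain ⟨A1, hA1, hsaeq⟩ := Set.mem_smul_set.1 hsa
    obtain ⟨B1, hB1, hsbeq⟩ := Set.mem_smul_set.1 hsb
    refine ⟨t•A1 + (1-t)•B1,
      Set.add_mem_add (Set.smul_mem_smul_set hA1) (Set.smul_mem_smul_set hB1), ?_⟩
    have hzy : z - (t•A1 + (1-t)•B1) = e + w2 + ((s-t)•A1 + (t-s)•B1) := by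
      have hh : z - (t•A1 + (1-t)•B1)
          = (g' + w1) + e + w2 - (t•A1 + (1-t)•B1) := by
        rw [← hzgw, ← hgdecomp, ← hwdecomp]; abel
      have hgw : g' + w1 = s•A1 + (1-s)•B1 := by rw [← hsab, ← hsaeq, ← hsbeq]
      rw [hh, hgw]
      module
    rw [dist_eq_norm, hzy]
    have hn1 : ‖e + w2 + ((s-t)•A1 + (t-s)•B1)‖
        ≤ ‖e‖ + ‖w2‖ + (‖(s-t)•A1‖ + ‖(t-s)•B1‖) :=
      le_trans (norm_add_le _ _) (add_le_add (norm_add_le _ _) (norm_add_le _ _))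
    have hnA : ‖(s-t)•A1‖ = |s-t| *‖A1‖ := by rw [norm_smul, Real.norm_eq_abs]
    have hnB : ‖(t-s)•B1‖ = |t-s| *‖B1‖ := by rw [norm_smul, Real.norm_eq_abs]
    have hA1M : ‖A1‖ ≤ Mu := hMu A1 hA1
    have hB1M : ‖B1‖ ≤ Mv := hMv B1 hB1
    have hsm : |s-t| *‖A1‖ + |t-s| *‖B1‖ ≤ ε/8 := by
      have h6 : |t-s| = |s-t| := abs_sub_comm t s
      have h7 : |s-t| *‖A1‖ + |t-s| *‖B1‖ ≤ |s-t| *(Mu+Mv) := by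
        rw [h6, mul_add]
        exact add_le_add (mul_le_mul_of_nonneg_left hA1M (abs_nonneg _))
          (mul_le_mul_of_nonneg_left hB1M (abs_nonneg _))
      have h8 : |s-t| *(Mu+Mv) ≤ η*(Mu+Mv+1) :=
        mul_le_mul hst.le (by linarith) (by linarith) hη0.le
      have h9 : η*(Mu+Mv+1) ≤ (ε/(8*(Mu+Mv+1)))*(Mu+Mv+1) :=
        mul_le_mul_of_nonneg_right hη3 (by positivity)
      have h10 : (ε/(8*(Mu+Mv+1)))*(Mu+Mv+1) = ε/8 := by field_simp
      linarith
    rw [hnA, hnB] at hn1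
    linarith
  rwa [hTcomp.isClosed.closure_eq] at hclose


lemma convpos {u v s : ℝ} (hu : 0 < u) (hv : 0 < v) (hs0 : 0 ≤ s) (hs1 : s ≤ 1) :
    0 < s*u + (1-s)*v := by
  rcases le_total u v with h | h
  · nlinarith [mul_nonneg (by linarith : (0:ℝ) ≤ 1-s) (sub_nonneg.2 h)]
  · nlinarith [mul_nonneg hs0 (sub_nonneg.2 h)]

/-- Bernstein–Doetsch type theorem, m = 1 case: a strongly
harmonically midconcave, upper semicontinuous set-valued function with nonempty
compact convex values is strongly harmonically concave with modulus c. -/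
theorem bernstein_doetsch
    {Y : Type*} [NormedAddCommGroup Y] [NormedSpace ℝ Y]
    (c : ℝ) (hc : 0 < c)
    (D : Set ℝ) (hD : D ⊆ Set.Ioi (0 : ℝ))
    (hDconv : ∀ x ∈ D, ∀ y ∈ D, ∀ s ∈ Set.Icc (0 : ℝ) 1,
      x * y / (s * x + (1 - s) * y) ∈ D)
    (F : ℝ → Set Y)
    (hFne : ∀ x ∈ D, (F x).Nonempty)
    (hFcomp : ∀ x ∈ D, IsCompact (F x))
    (hFconv : ∀ x ∈ D, Convex ℝ (F x))
    (hFmid : ∀ x ∈ D, ∀ y ∈ D,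
      F (2 * x * y / (x + y))
          + (c / 4 * ((x - y) / (x * y)) ^ 2) • Metric.closedBall (0 : Y) 1
        ⊆ (1 / 2 : ℝ) • F y + (1 / 2 : ℝ) • F x)
    (hFusc : ∀ x₀ ∈ D, ∀ ε > (0 : ℝ), ∃ δ > (0 : ℝ), ∀ x ∈ D, |x - x₀| < δ →
      F x₀ ⊆ F x + ε • Metric.closedBall (0 : Y) 1) :
    ∀ x ∈ D, ∀ y ∈ D, ∀ t ∈ Set.Icc (0 : ℝ) 1,
      F (x * y / (t * x + (1 - t) * y))
          + (c * t * (1 - t) * ((x - y) / (x * y)) ^ 2) • Metric.closedBall (0 : Y) 1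
        ⊆ t • F y + (1 - t) • F x := by
  set E : Set ℝ := {w : ℝ | 0 < w ∧ 1/w ∈ D} with hEdef
  have hmemE : ∀ x ∈ D, 1/x ∈ E := by
    intro x hx
    have hx0 : 0 < x := hD hx
    exact ⟨by positivity, by rwa [one_div_one_div]⟩
  have hE : ∀ u ∈ E, ∀ v ∈ E, ∀ s ∈ Set.Icc (0:ℝ) 1, s*u + (1-s)*v ∈ E := by
    rintro u ⟨hu0, huD⟩ v ⟨hv0, hvD⟩ s ⟨hs0, hs1⟩
    have hpos : 0 < s*u + (1-s)*v := convpos hu0 hv0 hs0 hs1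
    refine ⟨hpos, ?_⟩
    have hmem := hDconv (1/v) hvD (1/u) huD s ⟨hs0, hs1⟩
    have heq : (1/v) * (1/u) / (s * (1/v) + (1-s) * (1/u)) = 1/(s*u + (1-s)*v) := by
      rw [div_eq_div_iff (convpos (show (0:ℝ) < 1/v by positivity) (show (0:ℝ) < 1/u by positivity) hs0 hs1).ne' hpos.ne']
      field_simp
      try ring
    rwa [heq] at hmem
  have hGne : ∀ u ∈ E, (F (1/u)).Nonempty := fun u hu => hFne _ hu.2
  have hGcomp : ∀ u ∈ E, IsCompact (F (1/u)) := fun u hu => hFcomp _ hu.2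
  have hGconv : ∀ u ∈ E, Convex ℝ (F (1/u)) := fun u hu => hFconv _ hu.2
  have hGmid : ∀ u ∈ E, ∀ v ∈ E,
      F (1/((u+v)/2)) + (c/4 * (u-v)^2) • Metric.closedBall (0:Y) 1
        ⊆ (1/2:ℝ) • F (1/u) + (1/2:ℝ) • F (1/v) := by
    rintro u ⟨hu0, huD⟩ v ⟨hv0, hvD⟩
    have key := hFmid (1/u) huD (1/v) hvD
    have e1 : 2 * (1/u) * (1/v) / (1/u + 1/v) = 1/((u+v)/2) := by
      rw [div_eq_div_iff (by positivity) (by positivity)]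
      field_simp
      try ring
    have e2' : (1/u - 1/v) / ((1/u) * (1/v)) = v - u := by
      field_simp
      try ring
    have e2 : c / 4 * ((1/u - 1/v) / ((1/u) * (1/v))) ^ 2 = c/4 * (u-v)^2 := by
      rw [e2']
      ring
    rw [e1, e2] at key
    calc F (1/((u+v)/2)) + (c/4 * (u-v)^2) • Metric.closedBall (0:Y) 1
        ⊆ (1/2:ℝ) • F (1/v) + (1/2:ℝ) • F (1/u) := key
      _ = (1/2:ℝ) • F (1/u) + (1/2:ℝ) • F (1/v) := add_comm _ _
  have hGusc : ∀ u₀ ∈ E, ∀ ε > (0:ℝ), ∃ δ > (0:ℝ), ∀ u ∈ E, |u - u₀| < δ →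
      F (1/u₀) ⊆ F (1/u) + ε • Metric.closedBall (0:Y) 1 := by
    rintro u₀ ⟨hu₀0, hu₀D⟩ ε hε
    obtain ⟨δ, hδ0, hδ⟩ := hFusc (1/u₀) hu₀D ε hε
    refine ⟨min (u₀/2) (δ*u₀^2/2), lt_min (by positivity) (by positivity), ?_⟩
    rintro u ⟨hu0, huD⟩ hdu
    have hd1 : |u - u₀| < u₀/2 := lt_of_lt_of_le hdu (min_le_left _ _)
    have hd2 : |u - u₀| < δ*u₀^2/2 := lt_of_lt_of_le hdu (min_le_right _ _)
    have hugt : u₀/2 < u := by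
      have := abs_lt.1 hd1
      linarith [this.1]
    apply hδ (1/u) huD
    have he : 1/u - 1/u₀ = (u₀ - u)/(u*u₀) := by
      field_simp
    rw [he, abs_div, abs_of_pos (by positivity : (0:ℝ) < u*u₀),
      div_lt_iff₀ (by positivity : (0:ℝ) < u*u₀)]
    have h6 : |u₀ - u| = |u - u₀| := abs_sub_comm u₀ u
    have h7 : δ*u₀*(u₀/2) < δ*u₀*u := by
      apply mul_lt_mul_of_pos_left hugt (by positivity)
    nlinarith
  intro x hx y hy t ht
  have hx0 : 0 < x := hD hx
  have hy0 : 0 < y := hD hy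
  obtain ⟨ht0, ht1⟩ := ht
  have htpos : 0 < t*x + (1-t)*y := convpos hx0 hy0 ht0 ht1
  have hres := aux_concave c hc E hE (fun w => F (1/w)) hGne hGcomp hGconv hGmid hGusc
    (1/y) (hmemE y hy) (1/x) (hmemE x hx) t ⟨ht0, ht1⟩
  rw [one_div_one_div x, one_div_one_div y] at hres
  have e1 : (1:ℝ)/(t*(1/y)+(1-t)*(1/x)) = x*y/(t*x+(1-t)*y) := by
    rw [div_eq_div_iff (convpos (show (0:ℝ) < 1/y by positivity) (show (0:ℝ) < 1/x by positivity) ht0 ht1).ne' htpos.ne']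
    field_simp
  have e2 : c*t*(1-t)*((1/y)-(1/x))^2 = c*t*(1-t)*((x-y)/(x*y))^2 := by
    have e : (1:ℝ)/y - 1/x = (x-y)/(x*y) := by
      rw [div_sub_div _ _ hy0.ne' hx0.ne', one_mul, mul_one, mul_comm y x]
    rw [e]
  rw [e1, e2] at hres
  exact hres
end
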